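/- For any pair of nondegenerate hierarchies 𝒜, ℬ over a finite set S, the closed-form NNI navigation distance is bounded above by three halves of the crossing dissimilarity: d_Nav(𝒜,ℬ) ≤ (3/2)·d_CM(𝒜,ℬ). -/

import Mathlib

open scoped Classical

namespace TreeDist

variable {α : Type*} [DecidableEq α]

/-- Two finite sets are compatible if they are disjoint or nested. -/
def Compatible (A B : Finset α) : Prop :=
  A ∩ B = ∅ ∨ A ⊆ B ∨ B ⊆ A

/-- A hierarchy over `S`: a laminar family of nonempty subsets of `S`
containing `S` and all singletons. -/
def IsHierarchy (S : Finset α) (F : Finset (Finset α)) : Prop :=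
  (∀ A ∈ F, A ⊆ S ∧ A.Nonempty) ∧
  (∀ A ∈ F, ∀ B ∈ F, Compatible A B) ∧
  S ∈ F ∧ ∀ i ∈ S, ({i} : Finset α) ∈ F

/-- A nondegenerate (binary) hierarchy: a hierarchy with `2|S| - 1` clusters,
equivalently a maximal laminar family. -/
def Nondeg (S : Finset α) (F : Finset (Finset α)) : Prop :=
  IsHierarchy S F ∧ F.card = 2 * S.card - 1

/-- `P` is the parent of `I` in the family `F`: the smallest cluster of `F`
strictly containing `I`. -/
def IsParent (F : Finset (Finset α)) (I P : Finset α) : Prop :=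
  P ∈ F ∧ I ⊂ P ∧ ∀ Q ∈ F, I ⊂ Q → P ⊆ Q

/-- `G` is the result of an NNI move on `F` at some grandchild `C`:
`G = (F \ {parent C}) ∪ {grandparent C \ C}`. -/
def IsNNIMove (F G : Finset (Finset α)) : Prop :=
  ∃ C P GP, C ∈ F ∧ IsParent F C P ∧ IsParent F P GP ∧
    G = insert (GP \ C) (F.erase P)

/-- Restriction of a family of sets to `K`: `{A ∩ K : A ∈ F, A ∩ K ≠ ∅}`. -/
noncomputable def restrictFam (F : Finset (Finset α)) (K : Finset α) : Finset (Finset α) :=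
  (F.image (· ∩ K)).filter fun A => A.Nonempty

/-- The cardinality of the smallest common ancestor of `i` and `j` in `F`, i.e. the
minimum cardinality of a cluster of `F` containing both `i` and `j`. -/
noncomputable def caCard (F : Finset (Finset α)) (i j : α) : ℕ :=
  sInf {n | ∃ A ∈ F, i ∈ A ∧ j ∈ A ∧ A.card = n}

/-- Ultrametric representation `U(F)_{ij} = |ca(i,j)| - 1`. -/
noncomputable def Umat (F : Finset (Finset α)) (i j : α) : ℤ :=
  (caCard F i j : ℤ) - 1

/-- Cluster-cardinality distance `d_CC = (1/2) Σ_{i,j ∈ S} |U(F)_{ij} - U(G)_{ij}|`. -/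
noncomputable def dCC (S : Finset α) (F G : Finset (Finset α)) : ℚ :=
  (1 / 2) * ∑ i ∈ S, ∑ j ∈ S, |((Umat F i j : ℚ)) - ((Umat G i j : ℚ))|

/-- Robinson–Foulds distance: half the size of the symmetric difference of cluster sets. -/
noncomputable def dRF (F G : Finset (Finset α)) : ℚ :=
  (((F \ G) ∪ (G \ F)).card : ℚ) / 2

/-- Crossing dissimilarity: the number of incompatible pairs of clusters. -/
noncomputable def dCM (F G : Finset (Finset α)) : ℕ :=
  ((F ×ˢ G).filter fun p => ¬ Compatible p.1 p.2).card

/-- Depth of a cluster: the number of its strict ancestors in `F`. -/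
noncomputable def depth (F : Finset (Finset α)) (I : Finset α) : ℕ :=
  (F.filter fun J => I ⊂ J).card

/-- The children of `I` in `F`: the clusters of `F` whose parent is `I`. -/
noncomputable def children (F : Finset (Finset α)) (I : Finset α) : Finset (Finset α) :=
  F.filter fun C => IsParent F C I

/-- `η_{F,G}(I,J)`: the number of members of `(children I)|_J` incompatible with
the family `(children J)|_I`. -/
noncomputable def eta (F G : Finset (Finset α)) (I J : Finset α) : ℕ :=
  ((restrictFam (children F I) J).filter
    fun A => ∃ B ∈ restrictFam (children G J) I, ¬ Compatible A B).card

/-- `θ(x) = (x² + x)/2`. -/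
def theta (x : ℕ) : ℚ := ((x : ℚ) ^ 2 + x) / 2

/-- Closed-form NNI navigation distance `d_Nav(F,G) = Σ_{I∈F, J∈G} θ(η_{F,G}(I,J))`. -/
noncomputable def dNav (F G : Finset (Finset α)) : ℚ :=
  ∑ I ∈ F, ∑ J ∈ G, theta (eta F G I J)


/-!
In a nondegenerate hierarchy every cluster has at most two children, so `η ≤ 2`, and on
`{0, 1, 2}` we have `θ(x) ≤ (3/2) x`. It remains to see `Σ η ≤ d_CM`: a restricted child
`C ∩ J` of `I` counted by `η(I, J)` crosses some `D ∩ I` with `D` a child of `J`, and then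
`C` and `D` themselves cross. Since a child determines its parent, the crossing pairs of
children obtained for different `(I, J)` are distinct crossing pairs of clusters.
-/

open Finset

omit [DecidableEq α] in
lemma IsParent.unique {F : Finset (Finset α)} {C P P' : Finset α}
    (h : IsParent F C P) (h' : IsParent F C P') : P = P' :=
  subset_antisymm (h.2.2 P' h'.1 h'.2.1) (h'.2.2 P h.1 h.2.1)

omit [DecidableEq α] in
lemma mem_children {F : Finset (Finset α)} {C I : Finset α} :
    C ∈ children F I ↔ C ∈ F ∧ IsParent F C I :=
  mem_filter

omit [DecidableEq α] in
lemma disjoint_children {F : Finset (Finset α)} {I I' : Finset α} (h : I ≠ I') :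
    Disjoint (children F I) (children F I') :=
  disjoint_left.2 fun _ hI hI' => h ((mem_children.1 hI).2.unique (mem_children.1 hI').2)

lemma Compatible.inter_inter {C D I J : Finset α} (hCI : C ⊆ I) (hDJ : D ⊆ J)
    (h : Compatible C D) : Compatible (C ∩ J) (D ∩ I) := by
  rcases h with h | h | h
  · exact Or.inl (subset_empty.1 (h ▸ inter_subset_inter inter_subset_left inter_subset_left))
  · exact Or.inr (Or.inl (subset_inter (inter_subset_left.trans h) (inter_subset_left.trans hCI)))
  · exact Or.inr (Or.inr (subset_inter (inter_subset_left.trans h) (inter_subset_left.trans hDJ)))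

namespace IsHierarchy

variable {S : Finset α} {F : Finset (Finset α)}

lemma exists_parent (hF : IsHierarchy S F) {C : Finset α} (hC : C ∈ F) (hCS : C ≠ S) :
    ∃ P, IsParent F C P := by
  obtain ⟨hsub, hlam, hSF, -⟩ := hF
  obtain ⟨P, hP, hmin⟩ := (F.filter (C ⊂ ·)).exists_min_image card
    ⟨S, mem_filter.2 ⟨hSF, (hsub C hC).1.ssubset_of_ne hCS⟩⟩
  rw [mem_filter] at hP
  refine ⟨P, hP.1, hP.2, fun Q hQ hCQ => ?_⟩
  obtain ⟨x, hx⟩ := (hsub C hC).2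
  rcases hlam P hP.1 Q hQ with hPQ | hPQ | hQP
  · exact absurd (mem_inter.2 ⟨hP.2.subset hx, hCQ.subset hx⟩) (hPQ ▸ notMem_empty x)
  · exact hPQ
  · exact (eq_of_subset_of_card_le hQP (hmin Q (mem_filter.2 ⟨hQ, hCQ⟩))).ge

lemma biUnion_children (hF : IsHierarchy S F) : F.biUnion (children F) = F.erase S := by
  ext C
  simp only [mem_biUnion, mem_erase, mem_children]
  constructor
  · rintro ⟨I, hI, hCF, hCI⟩
    exact ⟨fun h => (h ▸ hCI.2.1).not_subset (hF.1 I hI).1, hCF⟩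
  · rintro ⟨hCS, hCF⟩
    obtain ⟨P, hP⟩ := hF.exists_parent hCF hCS
    exact ⟨P, hP.1, hCF, hP⟩

lemma sum_card_children (hF : IsHierarchy S F) : ∑ I ∈ F, #(children F I) = #F - 1 := by
  rw [← card_biUnion fun I _ I' _ h => disjoint_children h, hF.biUnion_children,
    card_erase_of_mem hF.2.2.1]

lemma card_filter_one_lt_card_add_card (hF : IsHierarchy S F) :
    #(F.filter fun A => 1 < #A) + #S = #F := by
  have hsingletons : F.filter (fun A => ¬ 1 < #A) = S.image ({·}) := by
    ext A
    simp only [mem_filter, mem_image, not_lt]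
    constructor
    · rintro ⟨hA, hA1⟩
      obtain ⟨x, rfl⟩ := card_eq_one.1 (le_antisymm hA1 (hF.1 A hA).2.card_pos)
      exact ⟨x, (hF.1 _ hA).1 (mem_singleton_self x), rfl⟩
    · rintro ⟨i, hi, rfl⟩
      exact ⟨hF.2.2.2 i hi, (card_singleton i).le⟩
  have hsplit := card_filter_add_card_filter_not (s := F) fun A => 1 < #A
  rwa [hsingletons, card_image_of_injective _ singleton_injective] at hsplit

lemma exists_mem_children (hF : IsHierarchy S F) {I : Finset α} (hI : I ∈ F) (h1 : 1 < #I)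
    {x : α} (hx : x ∈ I) : ∃ C ∈ children F I, x ∈ C := by
  have hxI : {x} ⊂ I := (singleton_subset_iff.2 hx).ssubset_of_ne (by rintro rfl; simp at h1)
  obtain ⟨Q, hQ, hmax⟩ := (F.filter fun Q => x ∈ Q ∧ Q ⊂ I).exists_max_image card
    ⟨{x}, mem_filter.2 ⟨hF.2.2.2 x ((hF.1 I hI).1 hx), mem_singleton_self x, hxI⟩⟩
  obtain ⟨hQF, hxQ, hQI⟩ := mem_filter.1 hQ
  obtain ⟨P, hP⟩ := hF.exists_parent hQF fun h => (h ▸ hQI).not_subset (hF.1 I hI).1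
  have hPI : P = I := by
    by_contra hne
    exact (hmax P (mem_filter.2 ⟨hP.1, hP.2.1.subset hxQ,
      (hP.2.2 I hI hQI).ssubset_of_ne hne⟩)).not_gt (card_lt_card hP.2.1)
  exact ⟨Q, mem_children.2 ⟨hQF, hPI ▸ hP⟩, hxQ⟩

lemma two_le_card_children (hF : IsHierarchy S F) {I : Finset α} (hI : I ∈ F) (h1 : 1 < #I) :
    2 ≤ #(children F I) := by
  obtain ⟨x, hx⟩ := card_pos.1 (zero_lt_one.trans h1)
  obtain ⟨C, hC, -⟩ := hF.exists_mem_children hI h1 hx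
  obtain ⟨y, hyI, hyC⟩ := exists_of_ssubset (mem_children.1 hC).2.2.1
  obtain ⟨C', hC', hyC'⟩ := hF.exists_mem_children hI h1 hyI
  exact one_lt_card.2 ⟨C, hC, C', hC', fun h => hyC (h ▸ hyC')⟩

end IsHierarchy

/-- The `|S|` singletons have no children and the other `|S| - 1` clusters have at least two
each, while there are only `2|S| - 2` parent-child edges. -/
lemma Nondeg.card_children_le_two {S : Finset α} {F : Finset (Finset α)} (hF : Nondeg S F)
    {I : Finset α} (hI : I ∈ F) : #(children F I) ≤ 2 := by
  obtain ⟨hH, hcard⟩ := hF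
  set T := F.filter fun A => 1 < #A
  have hsum : #(children F I) + ∑ J ∈ T.erase I, #(children F J) ≤ #F - 1 := by
    rw [← sum_insert (f := fun J => #(children F J)) (notMem_erase I T), ← hH.sum_card_children]
    exact sum_le_sum_of_subset (insert_subset hI ((erase_subset I T).trans (filter_subset _ F)))
  have hlow : #(T.erase I) • 2 ≤ ∑ J ∈ T.erase I, #(children F J) :=
    card_nsmul_le_sum _ _ _ fun J hJ =>
      have hJ := mem_filter.1 (mem_of_mem_erase hJ)
      hH.two_le_card_children hJ.1 hJ.2
  have herase : #T - 1 ≤ #(T.erase I) := pred_card_le_card_erase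
  have hT : #T + #S = #F := hH.card_filter_one_lt_card_add_card
  rw [smul_eq_mul] at hlow
  omega

lemma eta_le_card_children (F G : Finset (Finset α)) (I J : Finset α) :
    eta F G I J ≤ #(children F I) :=
  (card_filter_le _ _).trans ((card_filter_le _ _).trans card_image_le)

noncomputable def crossingPairs (𝒞 𝒟 : Finset (Finset α)) : Finset (Finset α × Finset α) :=
  (𝒞 ×ˢ 𝒟).filter fun p => ¬ Compatible p.1 p.2

lemma dCM_eq_card_crossingPairs (F G : Finset (Finset α)) : dCM F G = #(crossingPairs F G) :=
  rfl

lemma crossingPairs_mono {𝒞 𝒞' 𝒟 𝒟' : Finset (Finset α)} (h𝒞 : 𝒞 ⊆ 𝒞') (h𝒟 : 𝒟 ⊆ 𝒟') :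
    crossingPairs 𝒞 𝒟 ⊆ crossingPairs 𝒞' 𝒟' :=
  filter_subset_filter _ (product_subset_product h𝒞 h𝒟)

lemma eta_le_card_crossingPairs_children (F G : Finset (Finset α)) (I J : Finset α) :
    eta F G I J ≤ #(crossingPairs (children F I) (children G J)) := by
  refine (card_le_card ?_).trans (card_image_le (f := fun p => p.1 ∩ J))
  intro A hA
  simp only [mem_filter, restrictFam, mem_image] at hA
  obtain ⟨⟨⟨C, hC, rfl⟩, -⟩, B, ⟨⟨D, hD, rfl⟩, -⟩, hCD⟩ := hA
  refine mem_image.2 ⟨(C, D), ?_, rfl⟩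
  simp only [crossingPairs, mem_filter, mem_product]
  exact ⟨⟨hC, hD⟩, fun h => hCD (h.inter_inter (mem_children.1 hC).2.2.1.subset
    (mem_children.1 hD).2.2.1.subset)⟩

lemma sum_card_crossingPairs_children_le_dCM (F G : Finset (Finset α)) :
    ∑ I ∈ F, ∑ J ∈ G, #(crossingPairs (children F I) (children G J)) ≤ dCM F G := by
  rw [← sum_product' F G fun I J => #(crossingPairs (children F I) (children G J)),
    ← card_biUnion, dCM_eq_card_crossingPairs]
  · exact card_le_card (biUnion_subset.2 fun p _ =>
      crossingPairs_mono (filter_subset _ F) (filter_subset _ G))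
  · rintro ⟨I, J⟩ - ⟨I', J'⟩ - hne
    refine Disjoint.mono (filter_subset _ _) (filter_subset _ _) (disjoint_product.2 ?_)
    by_cases hI : I = I'
    · exact Or.inr (disjoint_children fun hJ => hne (Prod.ext hI hJ))
    · exact Or.inl (disjoint_children hI)

lemma sum_eta_le_dCM (F G : Finset (Finset α)) :
    ∑ I ∈ F, ∑ J ∈ G, eta F G I J ≤ dCM F G :=
  (sum_le_sum fun I _ => sum_le_sum fun J _ =>
    eta_le_card_crossingPairs_children F G I J).trans (sum_card_crossingPairs_children_le_dCM F G)

lemma theta_le_three_halves_mul {x : ℕ} (hx : x ≤ 2) : theta x ≤ 3 / 2 * x := by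
  interval_cases x <;> norm_num [theta]

theorem dNav_le_three_halves_dCM_general (S : Finset α) (F G : Finset (Finset α))
    (hF : Nondeg S F) :
    dNav F G ≤ (3 / 2) * (dCM F G : ℚ) :=
  calc dNav F G ≤ ∑ I ∈ F, ∑ J ∈ G, 3 / 2 * (eta F G I J : ℚ) :=
        sum_le_sum fun I hI => sum_le_sum fun J _ => theta_le_three_halves_mul
          ((eta_le_card_children F G I J).trans (hF.card_children_le_two hI))
    _ = 3 / 2 * ((∑ I ∈ F, ∑ J ∈ G, eta F G I J : ℕ) : ℚ) := by
        push_cast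
        simp only [mul_sum]
    _ ≤ 3 / 2 * (dCM F G : ℚ) := by
        gcongr
        exact_mod_cast sum_eta_le_dCM F G

theorem dNav_le_three_halves_dCM (S : Finset α) (F G : Finset (Finset α))
    (hF : Nondeg S F) (hG : Nondeg S G) :
    dNav F G ≤ (3 / 2) * (dCM F G : ℚ) :=
  dNav_le_three_halves_dCM_general S F G hF

end TreeDist
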